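/- Extend d and r by setting d(p) := 1 and r(p) := 1. Then (p+1) + Σ_{0 ≤ i < j ≤ p} ( d(i)·r(j) − d(j)·r(i) ) = n(0). -/

import Mathlib

/-- Determinant of the `m × m` tridiagonal matrix with diagonal entries
`a 1, …, a m`, entries `-1` on the sub- and superdiagonal, and `0` elsewhere.
For `m = 0` (the empty sequence) this is `1`. -/
def tridiagDet (m : ℕ) (a : ℕ → ℤ) : ℤ :=
  Matrix.det (Matrix.of fun i j : Fin m =>
    if (i : ℕ) = (j : ℕ) then a ((i : ℕ) + 1)
    else if (i : ℕ) + 1 = (j : ℕ) ∨ (j : ℕ) + 1 = (i : ℕ) then -1 else 0)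

/-- `nn n p i = D(n 1, …, n (p - i))`: the numerator of the `(p-i)`-th convergent
(equal to `1` for `i = p`, matching the convention `n(p) = 1`). -/
def nn (n : ℕ → ℤ) (p i : ℕ) : ℤ := tridiagDet (p - i) n

/-- `kk n p i = D(n 2, …, n (p - i))` for `i < p`, and `kk n p p = 0`
(the convention `k(p) = 0`). -/
def kk (n : ℕ → ℤ) (p i : ℕ) : ℤ :=
  if i = p then 0 else tridiagDet (p - i - 1) (fun j => n (j + 1))

/-!
Write `N = nn n p` and `K = kk n p`. The partial sums of `d` and `r` telescope to `N 0 - N j` and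
`K 0 - K j`, so the double sum equals `Σ_j ((N 0 - N j) r j - (K 0 - K j) d j)`. Each
`N j r j - K j d j = N (j+1) K j - N j K (j+1)` equals `1`: this is the determinant identity for
consecutive continuants, which follows from the three-term recursion
`D(a₁, …, a_{m+2}) = a₁ D(a₂, …, a_{m+2}) - D(a₃, …, a_{m+2})` obtained by cofactor expansion.
The remaining sums are `Σ r = K 0 + 1` and `Σ d = N 0`, leaving `N 0 - (p + 1)`.
-/

def tridiagMatrix (m : ℕ) (a : ℕ → ℤ) : Matrix (Fin m) (Fin m) ℤ :=
  Matrix.of fun i j : Fin m =>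
    if (i : ℕ) = (j : ℕ) then a ((i : ℕ) + 1)
    else if (i : ℕ) + 1 = (j : ℕ) ∨ (j : ℕ) + 1 = (i : ℕ) then -1 else 0

lemma tridiagDet_eq_det (m : ℕ) (a : ℕ → ℤ) : tridiagDet m a = (tridiagMatrix m a).det := rfl

lemma tridiagDet_zero (a : ℕ → ℤ) : tridiagDet 0 a = 1 := by
  simp [tridiagDet]

lemma tridiagDet_one (a : ℕ → ℤ) : tridiagDet 1 a = a 1 := by
  simp [tridiagDet]

lemma tridiagMatrix_submatrix_succ (m : ℕ) (a : ℕ → ℤ) :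
    (tridiagMatrix (m + 1) a).submatrix Fin.succ Fin.succ
      = tridiagMatrix m (fun j => a (j + 1)) := by
  ext i j
  simp [tridiagMatrix]

lemma det_tridiagMatrix_submatrix_succ_succAbove_one (m : ℕ) (a : ℕ → ℤ) :
    ((tridiagMatrix (m + 2) a).submatrix Fin.succ (Fin.succAbove 1)).det
      = -tridiagDet m (fun j => a (j + 2)) := by
  have hcol : (Fin.succAbove 1 ∘ Fin.succ : Fin m → Fin (m + 2)) = Fin.succ ∘ Fin.succ :=
    funext Fin.one_succAbove_succ
  have hminor : ((tridiagMatrix (m + 2) a).submatrix Fin.succ (Fin.succAbove 1)).submatrix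
      (Fin.succAbove 0) Fin.succ = tridiagMatrix m (fun j => a (j + 2)) := by
    rw [Matrix.submatrix_submatrix, Fin.succAbove_zero, hcol, ← Matrix.submatrix_submatrix,
      tridiagMatrix_submatrix_succ, tridiagMatrix_submatrix_succ]
  rw [Matrix.det_succ_column_zero, Fin.sum_univ_succ, hminor]
  simp [tridiagMatrix, tridiagDet_eq_det]

lemma tridiagDet_succ_succ (m : ℕ) (a : ℕ → ℤ) :
    tridiagDet (m + 2) a
      = a 1 * tridiagDet (m + 1) (fun j => a (j + 1)) - tridiagDet m (fun j => a (j + 2)) := by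
  rw [tridiagDet_eq_det, Matrix.det_succ_row_zero, Fin.sum_univ_succ, Fin.sum_univ_succ,
    Fin.succAbove_zero, tridiagMatrix_submatrix_succ, Fin.succ_zero_eq_one,
    det_tridiagMatrix_submatrix_succ_succAbove_one]
  simp [tridiagMatrix, tridiagDet_eq_det, sub_eq_add_neg]

theorem tridiagDet_mul_sub_mul_eq_one (m : ℕ) (a : ℕ → ℤ) :
    tridiagDet (m + 1) a * tridiagDet (m + 1) (fun j => a (j + 1))
      - tridiagDet (m + 2) a * tridiagDet m (fun j => a (j + 1)) = 1 := by
  induction m generalizing a with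
  | zero =>
    rw [tridiagDet_succ_succ, tridiagDet_one, tridiagDet_one, tridiagDet_zero, tridiagDet_zero]
    ring
  | succ k ih =>
    linear_combination tridiagDet (k + 2) (fun j => a (j + 1)) * tridiagDet_succ_succ k a
      - tridiagDet (k + 1) (fun j => a (j + 1)) * tridiagDet_succ_succ (k + 1) a
      + ih (fun j => a (j + 1))

lemma nn_self (n : ℕ → ℤ) (p : ℕ) : nn n p p = 1 := by
  rw [nn, Nat.sub_self, tridiagDet_zero]

lemma kk_self (n : ℕ → ℤ) (p : ℕ) : kk n p p = 0 := if_pos rfl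

lemma nn_succ_mul_kk_sub_mul_kk_succ (n : ℕ → ℤ) {p j : ℕ} (hj : j < p) :
    nn n p (j + 1) * kk n p j - nn n p j * kk n p (j + 1) = 1 := by
  obtain ⟨m, rfl⟩ := Nat.exists_eq_add_of_lt hj
  cases m with
  | zero => simp [nn, kk, tridiagDet_zero]
  | succ m =>
    have h := tridiagDet_mul_sub_mul_eq_one m n
    simp only [nn, kk, if_neg (show ¬j + 1 = j + (m + 1) + 1 by omega),
      if_neg (show ¬j = j + (m + 1) + 1 by omega)]
    rw [show j + (m + 1) + 1 - (j + 1) = m + 1 by omega, show j + (m + 1) + 1 - j = m + 2 by omega]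
    simpa using h

section LatticeArea

open Finset

variable {R : Type*} [CommRing R] {p : ℕ} {N K d r : ℕ → R}

lemma sum_range_eq_sub_of_forall_lt {G : Type*} [AddCommGroup G] {N d : ℕ → G} {j : ℕ}
    (hd : ∀ i < p, d i = N i - N (i + 1)) (hj : j ≤ p) :
    ∑ i ∈ range j, d i = N 0 - N j := by
  rw [sum_congr rfl fun i hi => hd i (by rw [mem_range] at hi; omega), sum_range_sub']

theorem lattice_area_identity
    (hd : ∀ i < p, d i = N i - N (i + 1)) (hdp : d p = 1)
    (hr : ∀ i < p, r i = K i - K (i + 1)) (hrp : r p = 1) (hNp : N p = 1) (hKp : K p = 0)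
    (hunimod : ∀ j < p, N (j + 1) * K j - N j * K (j + 1) = 1) :
    ((p : R) + 1) + ∑ j ∈ range (p + 1), ∑ i ∈ range j, (d i * r j - d j * r i) = N 0 := by
  have hcross : ∀ j ∈ range (p + 1), N j * r j - K j * d j = 1 := by
    intro j hj
    obtain hjp | rfl := (Nat.lt_succ_iff.mp (mem_range.mp hj)).lt_or_eq
    · rw [hd j hjp, hr j hjp]
      linear_combination hunimod j hjp
    · rw [hNp, hKp, hrp]
      ring
  have hsum_d : ∑ j ∈ range (p + 1), d j = N 0 := by
    rw [sum_range_succ, sum_range_eq_sub_of_forall_lt hd le_rfl, hdp, hNp]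
    ring
  have hsum_r : ∑ j ∈ range (p + 1), r j = K 0 + 1 := by
    rw [sum_range_succ, sum_range_eq_sub_of_forall_lt hr le_rfl, hrp, hKp]
    ring
  calc ((p : R) + 1) + ∑ j ∈ range (p + 1), ∑ i ∈ range j, (d i * r j - d j * r i)
      = ((p : R) + 1) + ∑ j ∈ range (p + 1), ((N 0 - N j) * r j - (K 0 - K j) * d j) := by
        congr 1
        refine sum_congr rfl fun j hj => ?_
        have hjp : j ≤ p := Nat.lt_succ_iff.mp (mem_range.mp hj)
        rw [sum_sub_distrib, ← sum_mul, ← mul_sum, sum_range_eq_sub_of_forall_lt hd hjp,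
          sum_range_eq_sub_of_forall_lt hr hjp]
        ring
    _ = ((p : R) + 1) + N 0 * ∑ j ∈ range (p + 1), r j - K 0 * ∑ j ∈ range (p + 1), d j
          - ∑ j ∈ range (p + 1), (N j * r j - K j * d j) := by
        simp only [mul_sum, sum_sub_distrib, sub_mul]
        ring
    _ = N 0 := by
        rw [hsum_r, hsum_d, sum_congr rfl hcross, sum_const, card_range, nsmul_one]
        push_cast
        ring

end LatticeArea

theorem dim_end_eq_n_general
    (p : ℕ) (n : ℕ → ℤ)
    (d r : ℕ → ℤ)
    (hd : ∀ i < p, d i = nn n p i - nn n p (i + 1)) (hdp : d p = 1)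
    (hr : ∀ i < p, r i = kk n p i - kk n p (i + 1)) (hrp : r p = 1) :
    ((p : ℤ) + 1) + ∑ j ∈ Finset.range (p + 1), ∑ i ∈ Finset.range j,
      (d i * r j - d j * r i) = nn n p 0 :=
  lattice_area_identity hd hdp hr hrp (nn_self n p) (kk_self n p)
    fun _ hj => nn_succ_mul_kk_sub_mul_kk_succ n hj

/-- Lattice-area identity: extending `d` and `r` by `d(p) := 1`, `r(p) := 1`,
one has `(p+1) + Σ_(0 ≤ i < j ≤ p) (d(i)·r(j) - d(j)·r(i)) = n(0)`. -/
theorem dim_end_eq_n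
    (p : ℕ) (hp : 1 ≤ p) (n : ℕ → ℤ) (hn : ∀ i, 1 ≤ i → i ≤ p → 2 ≤ n i)
    (d r : ℕ → ℤ)
    (hd : ∀ i < p, d i = nn n p i - nn n p (i + 1)) (hdp : d p = 1)
    (hr : ∀ i < p, r i = kk n p i - kk n p (i + 1)) (hrp : r p = 1) :
    ((p : ℤ) + 1) + ∑ j ∈ Finset.range (p + 1), ∑ i ∈ Finset.range j,
      (d i * r j - d j * r i) = nn n p 0 :=
  dim_end_eq_n_general p n d r hd hdp hr hrp
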